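/- Assume f satisfies (f_reg), (f_eq), (f_0), and that F_∞ := lim_{s→∞} F̂(s) is finite. Then every solution u of the Cauchy problem with datum d > 0 on [R1,R2] satisfies |u'(r)|^p/p' ≤ max{F̂(0), F_∞} and |u(r) - d| ≤ (p' · max{F̂(0), F_∞})^{1/p} · (R2 - R1) for every r ∈ [R1,R2]. Consequently, for every M > 0 there exists D > 0 such that for every d ≥ D, every solution u of the Cauchy problem with datum d, and every r ∈ [R1, r1], one has u(r) + |u'(r)| ≥ M. -/

import Mathlib

open Real Set Filter Topology

noncomputable def phip (p s : ℝ) : ℝ := |s| ^ (p - 2) * s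

def Freg (f : ℝ → ℝ) : Prop :=
  ContinuousOn f (Ici 0) ∧ ContDiffOn ℝ 1 f (Ioi 0)

def Feq (f : ℝ → ℝ) : Prop :=
  f 0 = 0 ∧ f 1 = 0 ∧ (∀ s : ℝ, 0 < s → s < 1 → f s < 0) ∧ (∀ s : ℝ, 1 < s → 0 < f s)

def Fzero (p : ℝ) (f : ℝ → ℝ) : Prop :=
  ∃ c : ℝ, ∀ᶠ s in 𝓝[>] (0:ℝ), c ≤ f s / s ^ (p - 1)

noncomputable def pstar (p : ℝ) (N : ℕ) : EReal :=
  if p < (N:ℝ) then (((N:ℝ) * p / ((N:ℝ) - p) : ℝ) : EReal) else ⊤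

noncomputable def fstar (f : ℝ → ℝ) (s : ℝ) : ℝ := sSup (f '' Icc 1 s)

noncomputable def Fint (f : ℝ → ℝ) (s : ℝ) : ℝ := ∫ σ in (1:ℝ)..s, f σ

def Fsubl (p : ℝ) (f : ℝ → ℝ) : Prop :=
  ∃ M : ℝ, 0 < M ∧ ∀ ε > 0, ∀ᶠ s in atTop, f s / s ^ (p - 1) ≤ M + ε

def FsubcWith (p : ℝ) (N : ℕ) (f : ℝ → ℝ) (η : ℝ) : Prop :=
  (∀ c : ℝ, ∃ᶠ s in atTop, c < f s / s ^ (p - 1)) ∧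
  0 < η ∧ η < 1 ∧
  ∃ L : ℝ, (L : EReal) < pstar p N ∧
    ∀ᶠ s in atTop, fstar f s * s / Fint f (η * s) ≤ L

def Fsubc (p : ℝ) (N : ℕ) (f : ℝ → ℝ) : Prop := ∃ η : ℝ, FsubcWith p N f η

/-- A radial solution of the Neumann problem on `[R1,R2]`. -/
def NeumannSol (p : ℝ) (N : ℕ) (R1 R2 : ℝ) (f u : ℝ → ℝ) : Prop :=
  (∀ x ∈ Icc R1 R2, DifferentiableAt ℝ u x) ∧
  ContinuousOn (deriv u) (Icc R1 R2) ∧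
  (∀ x ∈ Icc R1 R2, 0 < u x) ∧
  deriv u R1 = 0 ∧ deriv u R2 = 0 ∧
  ContinuousOn (fun x => x ^ (N - 1) * phip p (deriv u x)) (Icc R1 R2) ∧
  ∀ x ∈ Ioc R1 R2,
    HasDerivAt (fun t => t ^ (N - 1) * phip p (deriv u t)) (-(x ^ (N - 1)) * f (u x)) x

noncomputable def fhat (f : ℝ → ℝ) (s : ℝ) : ℝ := if 0 ≤ s then f s else 0

noncomputable def Fhat (f : ℝ → ℝ) (s : ℝ) : ℝ := ∫ σ in (1:ℝ)..s, fhat f σ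

/-- A solution of the Cauchy problem with datum `d`, for the nonlinearity `g`. -/
def CauchySol (p : ℝ) (N : ℕ) (R1 R2 : ℝ) (g u : ℝ → ℝ) (d : ℝ) : Prop :=
  (∀ x ∈ Icc R1 R2, DifferentiableAt ℝ u x) ∧
  ContinuousOn (deriv u) (Icc R1 R2) ∧
  u R1 = d ∧ deriv u R1 = 0 ∧
  ContinuousOn (fun x => x ^ (N - 1) * phip p (deriv u x)) (Icc R1 R2) ∧
  ∀ x ∈ Ioc R1 R2,
    HasDerivAt (fun t => t ^ (N - 1) * phip p (deriv u t)) (-(x ^ (N - 1)) * g (u x)) x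

noncomputable def rOne (R1 R2 : ℝ) (u : ℝ → ℝ) : ℝ :=
  sSup {x | x ∈ Icc R1 R2 ∧ ∀ s ∈ Ico R1 x, 0 < u s}

noncomputable def rZero (R2 η d : ℝ) (u : ℝ → ℝ) : ℝ :=
  sSup {x | x ∈ Icc 0 R2 ∧ ∀ s ∈ Ico 0 x, η * d < u s}

noncomputable def energy (p : ℝ) (f u : ℝ → ℝ) (x : ℝ) : ℝ :=
  |deriv u x| ^ p / (p / (p - 1)) + Fhat f (u x)

def NonConstOn (R1 R2 : ℝ) (u : ℝ → ℝ) : Prop :=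
  ∃ x ∈ Icc R1 R2, ∃ x' ∈ Icc R1 R2, u x ≠ u x'

def DistinctOn (R1 R2 : ℝ) (u v : ℝ → ℝ) : Prop :=
  ∃ x ∈ Icc R1 R2, u x ≠ v x

noncomputable def nOverPstar (p : ℝ) (N : ℕ) : ℝ :=
  if p < (N:ℝ) then ((N:ℝ) - p) / p else 0

/-!
Along a solution the energy `E = |u'|^p / p' + F̂(u)` satisfies
`E' = -((N - 1) / r) |u'|^p ≤ 0` (write `|u'|^p = |φ_p(u')|^{p'}` and use `φ_{p'} ∘ φ_p = id`),
so `|u'|^p / p' ≤ E(R1) = F̂(d)` because `F̂ ≥ 0`. As `F̂` decreases on `(-∞, 1]` and increases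
on `[1, ∞)`, `F̂(d) ≤ max (F̂(0), F_∞)`. The mean value theorem turns this uniform bound on `|u'|`
into `|u - d| ≤ C`, and then `u ≥ d - C ≥ M` as soon as `d ≥ M + C`.
-/

lemma hasDerivAt_abs_rpow_div_self {q : ℝ} (hq : 1 < q) (s : ℝ) :
    HasDerivAt (fun t => |t| ^ q / q) (phip q s) s := by
  refine ((hasDerivAt_abs_rpow s hq).div_const q).congr_deriv ?_
  rw [phip]
  field_simp [(by linarith : q ≠ 0)]

lemma abs_phip {p : ℝ} (hp : 1 < p) (s : ℝ) : |phip p s| = |s| ^ (p - 1) := by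
  rw [phip, abs_mul, abs_of_nonneg (rpow_nonneg (abs_nonneg s) _)]
  rcases eq_or_ne s 0 with rfl | hs
  · simp [zero_rpow (by linarith : p - 1 ≠ 0)]
  · rw [show p - 1 = p - 2 + 1 by ring, rpow_add_one (abs_ne_zero.2 hs)]

lemma phip_conj_phip {p : ℝ} (hp : 1 < p) (s : ℝ) : phip (p / (p - 1)) (phip p s) = s := by
  rcases eq_or_ne s 0 with rfl | hs
  · simp [phip]
  have hs' : 0 < |s| := abs_pos.2 hs
  have hexp : (p - 1) * (p / (p - 1) - 2) = -(p - 2) := by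
    field_simp [(by linarith : p - 1 ≠ 0)]
    ring
  rw [phip, abs_phip hp, ← rpow_mul hs'.le, hexp, phip, ← mul_assoc, ← rpow_add hs']
  simp

lemma abs_phip_rpow_conj {p : ℝ} (hp : 1 < p) (s : ℝ) :
    |phip p s| ^ (p / (p - 1)) = |s| ^ p := by
  rw [abs_phip hp, ← rpow_mul (abs_nonneg s)]
  congr 1
  field_simp [(by linarith : p - 1 ≠ 0)]

lemma mul_phip_nonneg (p s : ℝ) : 0 ≤ s * phip p s := by
  rw [phip, mul_left_comm]
  exact mul_nonneg (rpow_nonneg (abs_nonneg s) _) (mul_self_nonneg s)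

lemma HasDerivAt.of_pow_mul {w : ℝ → ℝ} {n : ℕ} {x g : ℝ} (hx : x ≠ 0)
    (h : HasDerivAt (fun t => t ^ n * w t) (-(x ^ n) * g) x) :
    HasDerivAt w (-(g + n / x * w x)) x := by
  have hquot := h.div (hasDerivAt_pow n x) (pow_ne_zero n hx)
  have hw : (fun t => t ^ n * w t / t ^ n) =ᶠ[𝓝 x] w := by
    filter_upwards [eventually_ne_nhds hx] with t ht
    exact mul_div_cancel_left₀ _ (pow_ne_zero n ht)
  refine (hquot.congr_of_eventuallyEq hw.symm).congr_deriv ?_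
  rcases n with _ | m
  · simp
  · rw [Nat.add_sub_cancel]
    field_simp
    ring

lemma continuous_fhat {f : ℝ → ℝ} (hf : ContinuousOn f (Ici 0)) (hf0 : f 0 = 0) :
    Continuous (fhat f) := by
  have h : fhat f = fun s => f (max s 0) := by
    funext s
    by_cases hs : 0 ≤ s
    · simp [fhat, hs]
    · simp [fhat, hs, max_eq_right (not_le.1 hs).le, hf0]
  rw [h]
  exact hf.comp_continuous (continuous_id.max continuous_const) fun s => le_max_right s 0

lemma hasDerivAt_Fhat {f : ℝ → ℝ} (hc : Continuous (fhat f)) (x : ℝ) :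
    HasDerivAt (Fhat f) (fhat f x) x :=
  intervalIntegral.integral_hasDerivAt_right (hc.intervalIntegrable 1 x)
    (hc.stronglyMeasurableAtFilter _ _) hc.continuousAt

lemma Fhat_antitoneOn {f : ℝ → ℝ} (heq : Feq f) (hc : Continuous (fhat f)) :
    AntitoneOn (Fhat f) (Iic 1) := by
  refine antitoneOn_of_hasDerivWithinAt_nonpos (convex_Iic 1)
    (fun x _ => (hasDerivAt_Fhat hc x).continuousAt.continuousWithinAt)
    (fun x _ => (hasDerivAt_Fhat hc x).hasDerivWithinAt) fun x hx => ?_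
  rw [interior_Iic] at hx
  unfold fhat
  split_ifs with h0
  · rcases h0.eq_or_lt with rfl | hpos
    · exact heq.1.le
    · exact (heq.2.2.1 x hpos hx).le
  · rfl

lemma Fhat_monotoneOn {f : ℝ → ℝ} (heq : Feq f) (hc : Continuous (fhat f)) :
    MonotoneOn (Fhat f) (Ici 1) := by
  refine monotoneOn_of_hasDerivWithinAt_nonneg (convex_Ici 1)
    (fun x _ => (hasDerivAt_Fhat hc x).continuousAt.continuousWithinAt)
    (fun x _ => (hasDerivAt_Fhat hc x).hasDerivWithinAt) fun x hx => ?_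
  rw [interior_Ici] at hx
  have hx0 : (0 : ℝ) ≤ x := by linarith [mem_Ioi.1 hx]
  simpa [fhat, hx0] using (heq.2.2.2 x hx).le

lemma Fhat_nonneg {f : ℝ → ℝ} (heq : Feq f) (hc : Continuous (fhat f)) (s : ℝ) :
    0 ≤ Fhat f s := by
  have hone : Fhat f 1 = 0 := intervalIntegral.integral_same
  rcases le_total s 1 with hs | hs
  · exact hone ▸ Fhat_antitoneOn heq hc hs self_mem_Iic hs
  · exact hone ▸ Fhat_monotoneOn heq hc self_mem_Ici hs hs

lemma Fhat_le_max {f : ℝ → ℝ} (heq : Feq f) (hc : Continuous (fhat f)) {Finf : ℝ}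
    (hF : Tendsto (Fhat f) atTop (𝓝 Finf)) {s : ℝ} (hs : 0 ≤ s) :
    Fhat f s ≤ max (Fhat f 0) Finf := by
  rcases le_total s 1 with hs1 | hs1
  · exact (Fhat_antitoneOn heq hc (mem_Iic.2 zero_le_one) hs1 hs).trans (le_max_left _ _)
  · refine (ge_of_tendsto hF ?_).trans (le_max_right _ _)
    filter_upwards [eventually_ge_atTop s] with t ht
    exact Fhat_monotoneOn heq hc hs1 (hs1.trans ht) ht

section CauchySol

variable {p : ℝ} {N : ℕ} {R1 R2 : ℝ} {f u : ℝ → ℝ} {d : ℝ}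

lemma continuousOn_energy (hp : 1 < p) (hc : Continuous (fhat f))
    (hu : CauchySol p N R1 R2 (fhat f) u d) : ContinuousOn (energy p f u) (Icc R1 R2) := by
  have hkin : ContinuousOn (fun t => |deriv u t| ^ p / (p / (p - 1))) (Icc R1 R2) :=
    (hu.2.1.abs.rpow_const fun _ _ => Or.inr (by linarith)).div_const _
  have hpot : ContinuousOn (fun t => Fhat f (u t)) (Icc R1 R2) := fun x hx =>
    (hasDerivAt_Fhat hc (u x)).continuousAt.comp_continuousWithinAt
      (hu.1 x hx).continuousAt.continuousWithinAt
  exact hkin.add hpot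

lemma hasDerivAt_energy (hp : 1 < p) (hR1 : 0 ≤ R1) (hc : Continuous (fhat f))
    (hu : CauchySol p N R1 R2 (fhat f) u d) {x : ℝ} (hx : x ∈ Ioo R1 R2) :
    HasDerivAt (energy p f u) (-((N - 1 : ℕ) / x * (deriv u x * phip p (deriv u x)))) x := by
  have hw := (hu.2.2.2.2.2 x ⟨hx.1, hx.2.le⟩).of_pow_mul (hR1.trans_lt hx.1).ne'
  have hq : 1 < p / (p - 1) := by rw [lt_div_iff₀ (by linarith)]; linarith
  have hkin := (hasDerivAt_abs_rpow_div_self hq (phip p (deriv u x))).comp x hw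
  have hpot := (hasDerivAt_Fhat hc (u x)).comp x (hu.1 x (Ioo_subset_Icc_self hx)).hasDerivAt
  have henergy : energy p f u =
      fun t => |phip p (deriv u t)| ^ (p / (p - 1)) / (p / (p - 1)) + Fhat f (u t) := by
    funext t
    rw [energy, abs_phip_rpow_conj hp]
  rw [henergy]
  refine (hkin.add hpot).congr_deriv ?_
  rw [phip_conj_phip hp]
  ring

lemma energy_antitoneOn (hp : 1 < p) (hR1 : 0 ≤ R1) (hc : Continuous (fhat f))
    (hu : CauchySol p N R1 R2 (fhat f) u d) : AntitoneOn (energy p f u) (Icc R1 R2) := by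
  refine antitoneOn_of_hasDerivWithinAt_nonpos (convex_Icc R1 R2) (continuousOn_energy hp hc hu)
    (f' := fun x => -((N - 1 : ℕ) / x * (deriv u x * phip p (deriv u x))))
    (fun x hx => ?_) fun x hx => ?_
  · rw [interior_Icc] at hx
    exact (hasDerivAt_energy hp hR1 hc hu hx).hasDerivWithinAt
  · rw [interior_Icc] at hx
    have hx0 : 0 < x := hR1.trans_lt hx.1
    have := mul_phip_nonneg p (deriv u x)
    rw [neg_nonpos]
    positivity

lemma energy_left (hp : 1 < p) (hu : CauchySol p N R1 R2 (fhat f) u d) :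
    energy p f u R1 = Fhat f d := by
  simp [energy, hu.2.2.1, hu.2.2.2.1, zero_rpow (by linarith : p ≠ 0)]

lemma abs_deriv_rpow_div_le_Fhat (hp : 1 < p) (hR1 : 0 ≤ R1) (heq : Feq f)
    (hc : Continuous (fhat f)) (hu : CauchySol p N R1 R2 (fhat f) u d) {x : ℝ}
    (hx : x ∈ Icc R1 R2) : |deriv u x| ^ p / (p / (p - 1)) ≤ Fhat f d := by
  have hdecay := energy_antitoneOn hp hR1 hc hu (left_mem_Icc.2 (hx.1.trans hx.2)) hx hx.1
  rw [energy_left hp hu, energy] at hdecay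
  linarith [Fhat_nonneg heq hc (u x)]

lemma abs_le_rpow_of_abs_rpow_div_le {p q B a : ℝ} (hp : 0 < p) (hq : 0 < q)
    (h : |a| ^ p / q ≤ B) : |a| ≤ (q * B) ^ (1 / p) := by
  rw [div_le_iff₀ hq, mul_comm] at h
  calc |a| = (|a| ^ p) ^ (1 / p) := by
        rw [← rpow_mul (abs_nonneg a), mul_one_div_cancel hp.ne', rpow_one]
    _ ≤ (q * B) ^ (1 / p) := rpow_le_rpow (rpow_nonneg (abs_nonneg a) _) h (by positivity)

lemma abs_sub_le_of_abs_deriv_rpow_div_le (hp : 1 < p) (hu : CauchySol p N R1 R2 (fhat f) u d)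
    {B : ℝ} (hB : ∀ y ∈ Icc R1 R2, |deriv u y| ^ p / (p / (p - 1)) ≤ B) {x : ℝ}
    (hx : x ∈ Icc R1 R2) : |u x - d| ≤ ((p / (p - 1)) * B) ^ (1 / p) * (R2 - R1) := by
  have hL : ∀ y ∈ Icc R1 R2, ‖deriv u y‖ ≤ ((p / (p - 1)) * B) ^ (1 / p) := fun y hy =>
    abs_le_rpow_of_abs_rpow_div_le (by linarith) (div_pos (by linarith) (by linarith)) (hB y hy)
  have hmvt := (convex_Icc R1 R2).norm_image_sub_le_of_norm_deriv_le (fun y hy => hu.1 y hy) hL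
    (left_mem_Icc.2 (hx.1.trans hx.2)) hx
  rw [hu.2.2.1, Real.norm_eq_abs, Real.norm_eq_abs, abs_of_nonneg (sub_nonneg.2 hx.1)] at hmvt
  exact hmvt.trans (mul_le_mul_of_nonneg_left (by linarith [hx.2]) ((norm_nonneg _).trans (hL x hx)))

end CauchySol

lemma rOne_le {R1 R2 : ℝ} (hR12 : R1 ≤ R2) (u : ℝ → ℝ) : rOne R1 R2 u ≤ R2 :=
  csSup_le ⟨R1, left_mem_Icc.2 hR12, fun _ hs => absurd hs.2 (not_lt.2 hs.1)⟩ fun _ hy => hy.1.2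

theorem stmt10_general (p : ℝ) (hp : 1 < p) (N : ℕ)
    (R1 R2 : ℝ) (hR1 : 0 ≤ R1) (hR12 : R1 < R2)
    (f : ℝ → ℝ) (hreg : Freg f) (heq : Feq f)
    (Finf : ℝ) (hF : Tendsto (Fhat f) atTop (𝓝 Finf)) :
    (∀ d : ℝ, 0 < d → ∀ u : ℝ → ℝ, CauchySol p N R1 R2 (fhat f) u d →
      ∀ x ∈ Icc R1 R2,
        |deriv u x| ^ p / (p / (p - 1)) ≤ max (Fhat f 0) Finf ∧
        |u x - d| ≤ ((p / (p - 1)) * max (Fhat f 0) Finf) ^ (1 / p) * (R2 - R1)) ∧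
    (∀ M : ℝ, 0 < M → ∃ D : ℝ, 0 < D ∧ ∀ d : ℝ, D ≤ d →
      ∀ u : ℝ → ℝ, CauchySol p N R1 R2 (fhat f) u d →
        ∀ x ∈ Icc R1 (rOne R1 R2 u), M ≤ u x + |deriv u x|) := by
  have hc : Continuous (fhat f) := continuous_fhat hreg.1 heq.1
  have hkin : ∀ d : ℝ, 0 < d → ∀ u : ℝ → ℝ, CauchySol p N R1 R2 (fhat f) u d →
      ∀ x ∈ Icc R1 R2, |deriv u x| ^ p / (p / (p - 1)) ≤ max (Fhat f 0) Finf :=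
    fun d hd u hu x hx =>
      (abs_deriv_rpow_div_le_Fhat hp hR1 heq hc hu hx).trans (Fhat_le_max heq hc hF hd.le)
  set C := ((p / (p - 1)) * max (Fhat f 0) Finf) ^ (1 / p) * (R2 - R1)
  have hdist : ∀ d : ℝ, 0 < d → ∀ u : ℝ → ℝ, CauchySol p N R1 R2 (fhat f) u d →
      ∀ x ∈ Icc R1 R2, |u x - d| ≤ C :=
    fun d hd u hu x hx => abs_sub_le_of_abs_deriv_rpow_div_le hp hu (hkin d hd u hu) hx
  refine ⟨fun d hd u hu x hx => ⟨hkin d hd u hu x hx, hdist d hd u hu x hx⟩, fun M hM => ?_⟩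
  have hC : 0 ≤ C := mul_nonneg (rpow_nonneg (mul_nonneg (div_pos (by linarith) (by linarith)).le
    ((Fhat_nonneg heq hc 0).trans (le_max_left _ _))) _) (by linarith)
  refine ⟨M + C, by linarith, fun d hd u hu x hx => ?_⟩
  have hx' : x ∈ Icc R1 R2 := ⟨hx.1, hx.2.trans (rOne_le hR12.le u)⟩
  linarith [neg_abs_le (u x - d), hdist d (by linarith) u hu x hx', abs_nonneg (deriv u x)]

theorem stmt10 (p : ℝ) (hp : 1 < p) (N : ℕ) (hN : 1 ≤ N)
    (R1 R2 : ℝ) (hR1 : 0 ≤ R1) (hR12 : R1 < R2)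
    (f : ℝ → ℝ) (hreg : Freg f) (heq : Feq f) (h0 : Fzero p f)
    (Finf : ℝ) (hF : Tendsto (Fhat f) atTop (𝓝 Finf)) :
    (∀ d : ℝ, 0 < d → ∀ u : ℝ → ℝ, CauchySol p N R1 R2 (fhat f) u d →
      ∀ x ∈ Icc R1 R2,
        |deriv u x| ^ p / (p / (p - 1)) ≤ max (Fhat f 0) Finf ∧
        |u x - d| ≤ ((p / (p - 1)) * max (Fhat f 0) Finf) ^ (1 / p) * (R2 - R1)) ∧
    (∀ M : ℝ, 0 < M → ∃ D : ℝ, 0 < D ∧ ∀ d : ℝ, D ≤ d →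
      ∀ u : ℝ → ℝ, CauchySol p N R1 R2 (fhat f) u d →
        ∀ x ∈ Icc R1 (rOne R1 R2 u), M ≤ u x + |deriv u x|) :=
  stmt10_general p hp N R1 R2 hR1 hR12 f hreg heq Finf hF
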